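/- Let n be a positive integer, let C ⊆ 2^[n] be a symmetric weakly separated collection, and let S ⊆ [n] be weakly separated from every member of C and weakly separated from S*. Then S* is weakly separated from every member of C, and C ∪ {S, S*} is a symmetric weakly separated collection. -/

import Mathlib

open Finset

/-- The K-involution on subsets of `[n] = {1,…,n}`:
`A* = {i ∈ [n] : n+1−i ∉ A}`. -/
def KInv (n : ℕ) (A : Finset ℕ) : Finset ℕ :=
  (Finset.Icc 1 n).filter (fun i => n + 1 - i ∉ A)

/-- `A` surrounds `B` (requires `B − A ≠ ∅`):
`min(A−B) < min(B−A)` and `max(A−B) > max(B−A)`,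
with the conventions `min ∅ = ⊤` and `max ∅ = ⊥`. -/
def Surrounds (A B : Finset ℕ) : Prop :=
  (B \ A).Nonempty ∧ (A \ B).min < (B \ A).min ∧ (B \ A).max < (A \ B).max

/-- `A` and `B` are chord separated: there are no `i<j<k<l` with `i,k` in one
of `A−B`, `B−A` and `j,l` in the other. -/
def ChordSep (A B : Finset ℕ) : Prop :=
  ¬ ∃ i j k l : ℕ, i < j ∧ j < k ∧ k < l ∧
    ((i ∈ A \ B ∧ k ∈ A \ B ∧ j ∈ B \ A ∧ l ∈ B \ A) ∨
     (i ∈ B \ A ∧ k ∈ B \ A ∧ j ∈ A \ B ∧ l ∈ A \ B))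

/-- `A` and `B` are strongly separated: there are no `i<j<k` with `i,k` in one
of `A−B`, `B−A` and `j` in the other. -/
def StrongSep (A B : Finset ℕ) : Prop :=
  ¬ ∃ i j k : ℕ, i < j ∧ j < k ∧
    ((i ∈ A \ B ∧ k ∈ A \ B ∧ j ∈ B \ A) ∨
     (i ∈ B \ A ∧ k ∈ B \ A ∧ j ∈ A \ B))

/-- `A` and `B` are weakly separated: chord separated, `|A| ≤ |B|` whenever
`A` surrounds `B`, and `|B| ≤ |A|` whenever `B` surrounds `A`. -/
def WeakSep (A B : Finset ℕ) : Prop :=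
  ChordSep A B ∧ (Surrounds A B → A.card ≤ B.card) ∧
    (Surrounds B A → B.card ≤ A.card)

/-- A symmetric weakly separated collection in `2^[n]`. -/
def SymmWColl (n : ℕ) (S : Finset (Finset ℕ)) : Prop :=
  (∀ A ∈ S, A ⊆ Finset.Icc 1 n) ∧ (∀ A ∈ S, KInv n A ∈ S) ∧
    ∀ A ∈ S, ∀ B ∈ S, WeakSep A B

/-! The K-involution is the reflection `x ↦ n + 1 - x` applied to complements in `[n]`, so for
`A, B ⊆ [n]` it maps `A − B` onto the reflection of `B − A`. Reflecting the two difference sets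
preserves chord separation, turns "`A*` surrounds `B*`" into "`B` surrounds `A`", and sends
cardinalities `k` to `n − k`; hence `A ↦ A*` preserves weak separation. Applied to `S` and `A*`
for `A ∈ C` this shows that `S*` is weakly separated from `A`; the rest is bookkeeping. -/

theorem Finset.min_lt_min_iff {α : Type*} [LinearOrder α] {s t : Finset α} :
    s.min < t.min ↔ ∃ a ∈ s, ∀ b ∈ t, a < b := by
  constructor
  · intro h
    obtain ⟨a, ha⟩ : ∃ a : α, s.min = a :=
      min_of_nonempty (nonempty_iff_ne_empty.2 fun hs => by simp [hs] at h)
    refine ⟨a, mem_of_min ha, fun b hb => ?_⟩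
    exact WithTop.coe_lt_coe.1 (ha ▸ h.trans_le (min_le hb))
  · rintro ⟨a, ha, hlt⟩
    refine (min_le ha).trans_lt ?_
    rw [min_eq_inf_withTop]
    exact (Finset.lt_inf_iff (WithTop.coe_lt_top a)).2 fun b hb => WithTop.coe_lt_coe.2 (hlt b hb)

theorem Finset.max_lt_max_iff {α : Type*} [LinearOrder α] {s t : Finset α} :
    t.max < s.max ↔ ∃ a ∈ s, ∀ b ∈ t, b < a := by
  constructor
  · intro h
    obtain ⟨a, ha⟩ : ∃ a : α, s.max = a :=
      max_of_nonempty (nonempty_iff_ne_empty.2 fun hs => by simp [hs] at h)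
    refine ⟨a, mem_of_max ha, fun b hb => ?_⟩
    exact WithBot.coe_lt_coe.1 (ha ▸ (le_max hb).trans_lt h)
  · rintro ⟨a, ha, hlt⟩
    refine lt_of_lt_of_le ?_ (le_max ha)
    rw [max_eq_sup_withBot]
    exact (Finset.sup_lt_iff (WithBot.bot_lt_coe a)).2 fun b hb => WithBot.coe_lt_coe.2 (hlt b hb)

theorem surrounds_iff {A B : Finset ℕ} :
    Surrounds A B ↔ (B \ A).Nonempty ∧ (∃ a ∈ A \ B, ∀ b ∈ B \ A, a < b) ∧
      ∃ a ∈ A \ B, ∀ b ∈ B \ A, b < a := by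
  rw [Surrounds, min_lt_min_iff, max_lt_max_iff]

section KInv

variable {n : ℕ} {A B : Finset ℕ}

theorem mem_kInv {i : ℕ} : i ∈ KInv n A ↔ i ∈ Icc 1 n ∧ n + 1 - i ∉ A :=
  mem_filter

theorem kInv_subset_Icc : KInv n A ⊆ Icc 1 n :=
  filter_subset _ _

theorem kInv_kInv (hA : A ⊆ Icc 1 n) : KInv n (KInv n A) = A := by
  ext i
  have hiIcc := @hA i
  simp only [mem_kInv, mem_Icc] at hiIcc ⊢
  constructor
  · rintro ⟨hi, hiA⟩
    by_contra h
    exact hiA ⟨by omega, by rwa [show n + 1 - (n + 1 - i) = i by omega]⟩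
  · intro h
    refine ⟨hiIcc h, fun hi => hi.2 ?_⟩
    rwa [show n + 1 - (n + 1 - i) = i by omega]

theorem injOn_reflect : Set.InjOn (fun x => n + 1 - x) (Icc 1 n) := by
  intro x hx y hy (hxy : n + 1 - x = n + 1 - y)
  simp only [coe_Icc, Set.mem_Icc] at hx hy
  omega

theorem kInv_eq_image : KInv n A = (Icc 1 n \ A).image (fun x => n + 1 - x) := by
  ext i
  simp only [mem_kInv, mem_image, mem_sdiff, mem_Icc]
  constructor
  · rintro ⟨hi, hiA⟩
    exact ⟨n + 1 - i, ⟨by omega, hiA⟩, by omega⟩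
  · rintro ⟨x, ⟨hx, hxA⟩, rfl⟩
    exact ⟨by omega, by rwa [show n + 1 - (n + 1 - x) = x by omega]⟩

theorem card_kInv (hA : A ⊆ Icc 1 n) : (KInv n A).card = n - A.card := by
  rw [kInv_eq_image, card_image_of_injOn (injOn_reflect.mono (by simp)),
    card_sdiff_of_subset hA, Nat.card_Icc, Nat.add_sub_cancel]

theorem mem_kInv_sdiff_kInv {i : ℕ} :
    i ∈ KInv n A \ KInv n B ↔ i ∈ Icc 1 n ∧ n + 1 - i ∈ B \ A := by
  simp only [mem_sdiff, mem_kInv]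
  tauto

theorem kInv_sdiff_kInv (hB : B ⊆ Icc 1 n) :
    KInv n A \ KInv n B = (B \ A).image (fun x => n + 1 - x) := by
  ext i
  simp only [mem_kInv_sdiff_kInv, mem_image, mem_Icc]
  constructor
  · rintro ⟨hi, hiBA⟩
    exact ⟨n + 1 - i, hiBA, by omega⟩
  · rintro ⟨x, hx, rfl⟩
    have := mem_Icc.1 (hB (mem_sdiff.1 hx).1)
    exact ⟨by omega, by rwa [show n + 1 - (n + 1 - x) = x by omega]⟩

end KInv

section Separation

variable {n : ℕ} {A B : Finset ℕ}

theorem ChordSep.symm (h : ChordSep A B) : ChordSep B A :=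
  fun ⟨i, j, k, l, hij, hjk, hkl, hquad⟩ => h ⟨i, j, k, l, hij, hjk, hkl, hquad.symm⟩

theorem ChordSep.kInv (h : ChordSep A B) : ChordSep (KInv n A) (KInv n B) := by
  rintro ⟨i, j, k, l, hij, hjk, hkl, hquad⟩
  simp only [mem_kInv_sdiff_kInv, mem_Icc] at hquad
  have hbounds : 1 ≤ i ∧ l ≤ n := by
    rcases hquad with h | h
    exacts [⟨h.1.1.1, h.2.2.2.1.2⟩, ⟨h.1.1.1, h.2.2.2.1.2⟩]
  exact h ⟨n + 1 - l, n + 1 - k, n + 1 - j, n + 1 - i, by omega, by omega, by omega, by tauto⟩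

theorem surrounds_of_surrounds_kInv (hA : A ⊆ Icc 1 n) (hB : B ⊆ Icc 1 n)
    (h : Surrounds (KInv n A) (KInv n B)) : Surrounds B A := by
  simp only [surrounds_iff, kInv_sdiff_kInv hA, kInv_sdiff_kInv hB, image_nonempty,
    forall_mem_image, exists_mem_image] at h ⊢
  obtain ⟨hne, ⟨b, hb, hb_lt⟩, ⟨b', hb', hb'_gt⟩⟩ := h
  refine ⟨hne, ⟨b', hb', fun a ha => ?_⟩, ⟨b, hb, fun a ha => ?_⟩⟩ <;>
  · have := hb_lt ha
    have := hb'_gt ha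
    have := mem_Icc.1 (hA (mem_sdiff.1 ha).1)
    omega

theorem WeakSep.symm (h : WeakSep A B) : WeakSep B A :=
  ⟨h.1.symm, h.2.2, h.2.1⟩

theorem weakSep_self (A : Finset ℕ) : WeakSep A A := by
  simp [WeakSep, ChordSep, Surrounds]

theorem WeakSep.kInv (hA : A ⊆ Icc 1 n) (hB : B ⊆ Icc 1 n) (h : WeakSep A B) :
    WeakSep (KInv n A) (KInv n B) := by
  have hcardA : A.card ≤ n := by simpa using card_le_card hA
  have hcardB : B.card ≤ n := by simpa using card_le_card hB
  refine ⟨h.1.kInv, fun hs => ?_, fun hs => ?_⟩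
  · have := h.2.2 (surrounds_of_surrounds_kInv hA hB hs)
    rw [card_kInv hA, card_kInv hB]
    omega
  · have := h.2.1 (surrounds_of_surrounds_kInv hB hA hs)
    rw [card_kInv hA, card_kInv hB]
    omega

end Separation

section SymmWColl

variable {n : ℕ} {C D : Finset (Finset ℕ)}

theorem SymmWColl.union (hC : SymmWColl n C) (hD : SymmWColl n D)
    (hCD : ∀ A ∈ C, ∀ B ∈ D, WeakSep A B) : SymmWColl n (C ∪ D) := by
  refine ⟨forall_mem_union.2 ⟨hC.1, hD.1⟩, fun A hA => ?_, fun A hA B hB => ?_⟩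
  · rcases mem_union.1 hA with hA | hA
    exacts [mem_union_left _ (hC.2.1 A hA), mem_union_right _ (hD.2.1 A hA)]
  · rcases mem_union.1 hA with hA | hA <;> rcases mem_union.1 hB with hB | hB
    exacts [hC.2.2 A hA B hB, hCD A hA B hB, (hCD B hB A hA).symm, hD.2.2 A hA B hB]

theorem symmWColl_pair {S : Finset ℕ} (hS : S ⊆ Icc 1 n) (hself : WeakSep S (KInv n S)) :
    SymmWColl n {S, KInv n S} := by
  have hmem {A : Finset ℕ} : A ∈ ({S, KInv n S} : Finset _) ↔ A = S ∨ A = KInv n S := by simp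
  refine ⟨fun A hA => ?_, fun A hA => ?_, fun A hA B hB => ?_⟩
  · rcases hmem.1 hA with rfl | rfl
    exacts [hS, kInv_subset_Icc]
  · rcases hmem.1 hA with rfl | rfl
    exacts [hmem.2 (.inr rfl), hmem.2 (.inl (kInv_kInv hS))]
  · rcases hmem.1 hA with rfl | rfl <;> rcases hmem.1 hB with rfl | rfl
    exacts [weakSep_self _, hself, hself.symm, weakSep_self _]

end SymmWColl

theorem symmWColl_insert_pair_general
    (n : ℕ)
    (C : Finset (Finset ℕ)) (hC : SymmWColl n C)
    (S : Finset ℕ) (hS : S ⊆ Finset.Icc 1 n)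
    (hsep : ∀ A ∈ C, WeakSep S A) (hself : WeakSep S (KInv n S)) :
    (∀ A ∈ C, WeakSep (KInv n S) A) ∧ SymmWColl n (C ∪ {S, KInv n S}) := by
  have hsep' : ∀ A ∈ C, WeakSep (KInv n S) A := fun A hA => by
    simpa only [kInv_kInv (hC.1 A hA)] using (hsep _ (hC.2.1 A hA)).kInv hS kInv_subset_Icc
  refine ⟨hsep', hC.union (symmWColl_pair hS hself) fun A hA B hB => ?_⟩
  rcases mem_insert.1 hB with rfl | hB
  · exact (hsep A hA).symm
  · exact mem_singleton.1 hB ▸ (hsep' A hA).symm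

/-- If `C` is a symmetric weakly separated collection and `S ⊆ [n]` is weakly
separated from every member of `C` and from `S*`, then `S*` is weakly
separated from every member of `C` and `C ∪ {S, S*}` is a symmetric weakly
separated collection. -/
theorem symmWColl_insert_pair
    (n : ℕ) (hn : 0 < n)
    (C : Finset (Finset ℕ)) (hC : SymmWColl n C)
    (S : Finset ℕ) (hS : S ⊆ Finset.Icc 1 n)
    (hsep : ∀ A ∈ C, WeakSep S A) (hself : WeakSep S (KInv n S)) :
    (∀ A ∈ C, WeakSep (KInv n S) A) ∧ SymmWColl n (C ∪ {S, KInv n S}) :=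
  symmWColl_insert_pair_general n C hC S hS hsep hself
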